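/- arXiv:1607.00458 — 2 statements merged into one kernel-verified Lean document; each statement's English description precedes it below -/
import Mathlib

section
/- Let λ,μ > 0 and let g : ℝ → ℝ be continuous satisfying (g2): liminf_{t→0⁺} G(t)/t² = +∞. Then for every ū ∈ X₀ ∩ L^∞(ℝⁿ) with ū ≥ 0 a.e. and ū not a.e. zero in Ω, there exists t₀ > 0 such that E_{λ,μ}(t ū) < 0 for all t ∈ (0,t₀), where E_{λ,μ}(u) := (1/2)‖u‖² − (μ/2*)∫_Ω |u|^{2*} dx − λ∫_Ω G(u) dx. In particular 0 is not a local minimizer of E_{λ,μ}. -/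
open MeasureTheory Filter Topology Set

noncomputable section

/-- Euclidean space `ℝⁿ`. -/
abbrev EV (n : ℕ) := EuclideanSpace ℝ (Fin n)

/-- The fractional critical Sobolev exponent `2* = 2n/(n-2s)`. -/
def twoStar (n : ℕ) (s : ℝ) : ℝ := 2 * n / (n - 2 * s)

/-- Gagliardo-type bilinear form `⟨u,v⟩ = ∬ (u(x)-u(y))(v(x)-v(y)) K(x-y) dx dy`. -/
def gInner {n : ℕ} (K : EV n → ℝ) (u v : EV n → ℝ) : ℝ :=
  ∫ p : EV n × EV n, (u p.1 - u p.2) * (v p.1 - v p.2) * K (p.1 - p.2)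

/-- Gagliardo norm `‖u‖ = ⟨u,u⟩^{1/2}`. -/
def gNorm {n : ℕ} (K : EV n → ℝ) (u : EV n → ℝ) : ℝ := Real.sqrt (gInner K u u)

/-- Membership in the space `X₀`: measurable, vanishing a.e. outside `Ω`,
with finite Gagliardo seminorm. -/
structure MemX0 {n : ℕ} (K : EV n → ℝ) (Ω : Set (EV n)) (u : EV n → ℝ) : Prop where
  meas : Measurable u
  zero : ∀ᵐ x ∂(volume : Measure (EV n)), x ∉ Ω → u x = 0
  fin : Integrable (fun p : EV n × EV n => (u p.1 - u p.2) ^ 2 * K (p.1 - p.2))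

/-- `L^p` norm (real exponent `p`) on `Ω`. -/
def lpNorm {n : ℕ} (Ω : Set (EV n)) (p : ℝ) (u : EV n → ℝ) : ℝ :=
  (∫ x in Ω, |u x| ^ p) ^ (1 / p)

/-- Weak convergence in `X₀`. -/
def WeakConv {n : ℕ} (K : EV n → ℝ) (Ω : Set (EV n)) (uj : ℕ → EV n → ℝ)
    (u : EV n → ℝ) : Prop :=
  ∀ v, MemX0 K Ω v → Tendsto (fun j => gInner K (uj j) v) atTop (𝓝 (gInner K u v))

/-- The singular kernel `|x|^{-(n+2s)}` of the fractional Laplacian. -/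
def fracKernel (n : ℕ) (s : ℝ) : EV n → ℝ := fun x => ‖x‖ ^ (-((n : ℝ) + 2 * s))

/-- The energy functional `E_{λ,μ}`. -/
def energy {n : ℕ} (s : ℝ) (K : EV n → ℝ) (Ω : Set (EV n)) (μ lam : ℝ)
    (g : ℝ → ℝ) (u : EV n → ℝ) : ℝ :=
  1 / 2 * gNorm K u ^ 2 - μ / twoStar n s * (∫ x in Ω, |u x| ^ twoStar n s)
    - lam * ∫ x in Ω, (∫ τ in (0:ℝ)..(u x), g τ)

/-- The functional `Ê_μ`. -/
def energyHat {n : ℕ} (s : ℝ) (K : EV n → ℝ) (Ω : Set (EV n)) (μ : ℝ)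
    (u : EV n → ℝ) : ℝ :=
  1 / 2 * gNorm K u ^ 2 - μ / twoStar n s * (∫ x in Ω, |u x| ^ twoStar n s)

/-- The functional `Ẽ_{λ,μ}`. -/
def energyTilde {n : ℕ} (s : ℝ) (K : EV n → ℝ) (Ω : Set (EV n)) (μ lam : ℝ)
    (g : ℝ → ℝ) (u : EV n → ℝ) : ℝ :=
  μ / twoStar n s * (∫ x in Ω, |u x| ^ twoStar n s)
    + lam * ∫ x in Ω, (∫ τ in (0:ℝ)..(u x), g τ)

/-- The energy functional of the singular problem. -/
def energySing {n : ℕ} (s : ℝ) (K : EV n → ℝ) (Ω : Set (EV n)) (μ lam r : ℝ)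
    (g : ℝ → ℝ) (u : EV n → ℝ) : ℝ :=
  1 / 2 * gNorm K u ^ 2 - μ / twoStar n s * (∫ x in Ω, (max (u x) 0) ^ twoStar n s)
    - lam / r * (∫ x in Ω, (max (u x) 0) ^ r)
    - lam * ∫ x in Ω, (∫ τ in (0:ℝ)..(max (u x) 0), g τ)

/-!
By (g2), for every `M` one has `G(t) ≥ M t²` for small `t ≥ 0`. For a bounded nonnegative `ū`
and small `t`, the `G`-term of `E(t ū)` is then at least `λ M t² ∫_Ω ū²`, which for large `M`
dominates the quadratic term `t² ‖ū‖² / 2`, while the critical term only lowers the energy.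
Applying this to a smooth bump supported in `Ω` and shrinking `t` produces elements of `X₀` of
arbitrarily small norm and negative energy.
-/

open scoped NNReal ENNReal

section ConvolutionIntegrand

variable {G : Type*} [AddGroup G] [MeasurableSpace G] [MeasurableAdd₂ G] [MeasurableNeg G]
  {μ : Measure G} [SFinite μ] [μ.IsAddRightInvariant] {f m : G → ℝ}

theorem integrable_mul_comp_sub_snd (hf : Integrable f μ) (hm : Integrable m μ) :
    Integrable (fun p : G × G => f p.2 * m (p.1 - p.2)) (μ.prod μ) := by
  simpa using hf.convolution_integrand (ContinuousLinearMap.mul ℝ ℝ) hm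

theorem integrable_mul_comp_sub_fst [μ.IsNegInvariant] (hf : Integrable f μ)
    (hm : Integrable m μ) :
    Integrable (fun p : G × G => f p.1 * m (p.1 - p.2)) (μ.prod μ) := by
  simpa [Function.comp_def] using (integrable_mul_comp_sub_snd hf hm.comp_neg).swap

end ConvolutionIntegrand

theorem sq_sub_le_of_lipschitzWith {X : Type*} [PseudoMetricSpace X] {w : X → ℝ} {L : ℝ≥0}
    (hw : LipschitzWith L w) {B : ℝ} (hB : ∀ x, |w x| ≤ B) {S : Set X}
    (hS : Function.support w ⊆ S) (x y : X) :
    (w x - w y) ^ 2 ≤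
      max ((L : ℝ) ^ 2) ((2 * B) ^ 2) * min (dist x y ^ 2) 1 *
        (S.indicator 1 x + S.indicator 1 y) := by
  by_cases hxy : x ∈ S ∨ y ∈ S
  · have hind : 1 ≤ S.indicator (1 : X → ℝ) x + S.indicator 1 y := by
      have h0 : ∀ z, 0 ≤ S.indicator (1 : X → ℝ) z :=
        fun z => indicator_nonneg (fun _ _ => zero_le_one) z
      have := h0 x
      have := h0 y
      rcases hxy with h | h <;> simp only [indicator_of_mem h, Pi.one_apply] <;> linarith
    have hlip : (w x - w y) ^ 2 ≤ L ^ 2 * dist x y ^ 2 := by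
      rw [← sq_abs, ← mul_pow, ← Real.dist_eq]
      exact pow_le_pow_left₀ dist_nonneg (hw.dist_le_mul x y) 2
    have hbdd : (w x - w y) ^ 2 ≤ (2 * B) ^ 2 := by
      rw [← sq_abs]
      exact pow_le_pow_left₀ (abs_nonneg _) ((abs_sub _ _).trans (by linarith [hB x, hB y])) 2
    have hmin : (w x - w y) ^ 2 ≤ max ((L : ℝ) ^ 2) ((2 * B) ^ 2) * min (dist x y ^ 2) 1 := by
      rcases le_total (dist x y ^ 2) 1 with h | h
      · rw [min_eq_left h]
        exact hlip.trans (mul_le_mul_of_nonneg_right (le_max_left _ _) (by positivity))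
      · rw [min_eq_right h, mul_one]
        exact hbdd.trans (le_max_right _ _)
    calc (w x - w y) ^ 2 ≤ max ((L : ℝ) ^ 2) ((2 * B) ^ 2) * min (dist x y ^ 2) 1 * 1 := by
          rwa [mul_one]
      _ ≤ _ := mul_le_mul_of_nonneg_left hind (by positivity)
  · push Not at hxy
    rw [Function.notMem_support.mp fun h => hxy.1 (hS h),
      Function.notMem_support.mp fun h => hxy.2 (hS h),
      indicator_of_notMem hxy.1, indicator_of_notMem hxy.2]
    simp

section Gagliardo

variable {E : Type*} [NormedAddCommGroup E] [MeasurableSpace E] [BorelSpace E] {K : E → ℝ}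

theorem aemeasurable_of_integrable_min_sq_norm_mul {μ : Measure E} [NullSingletonClass μ]
    (hK : Integrable (fun x => min (‖x‖ ^ 2) 1 * K x) μ) : AEMeasurable K μ := by
  have hK_eq : K =ᵐ[μ] fun x => min (‖x‖ ^ 2) 1 * K x / min (‖x‖ ^ 2) 1 := by
    filter_upwards [compl_mem_ae_iff.mpr (measure_singleton (μ := μ) (0 : E))] with x hx
    have hpos : 0 < min (‖x‖ ^ 2) 1 := lt_min (pow_pos (norm_pos_iff.mpr hx) 2) one_pos
    exact (mul_div_cancel_left₀ _ hpos.ne').symm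
  exact (hK.aemeasurable.div (by fun_prop)).congr hK_eq.symm

theorem integrable_sq_sub_mul_of_lipschitzWith [NormedSpace ℝ E] [FiniteDimensional ℝ E]
    [Nontrivial E] {μ : Measure E} [μ.IsAddHaarMeasure] (hKpos : ∀ x, x ≠ 0 → 0 < K x)
    (hK : Integrable (fun x => min (‖x‖ ^ 2) 1 * K x) μ) {w : E → ℝ} {L : ℝ≥0}
    (hw : LipschitzWith L w) (hwc : HasCompactSupport w) :
    Integrable (fun p : E × E => (w p.1 - w p.2) ^ 2 * K (p.1 - p.2)) (μ.prod μ) := by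
  obtain ⟨B, hB⟩ := hwc.exists_bound_of_continuous hw.continuous
  set S := tsupport w
  have hS : Integrable (S.indicator (1 : E → ℝ)) μ :=
    (integrable_indicator_iff (isClosed_tsupport w).measurableSet).mpr
      (integrableOn_const hwc.measure_lt_top.ne)
  have hmajor := ((integrable_mul_comp_sub_fst hS hK).add
    (integrable_mul_comp_sub_snd hS hK)).const_mul (max ((L : ℝ) ^ 2) ((2 * B) ^ 2))
  have hKmeas : AEStronglyMeasurable (fun p : E × E => K (p.1 - p.2)) (μ.prod μ) :=
    ((aemeasurable_of_integrable_min_sq_norm_mul hK).comp_quasiMeasurePreserving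
      (quasiMeasurePreserving_sub μ μ)).aestronglyMeasurable
  have hcont : Continuous fun p : E × E => (w p.1 - w p.2) ^ 2 :=
    ((hw.continuous.comp continuous_fst).sub (hw.continuous.comp continuous_snd)).pow 2
  refine hmajor.mono' (hcont.aestronglyMeasurable.mul hKmeas) (ae_of_all _ fun ⟨x, y⟩ => ?_)
  rcases eq_or_ne x y with rfl | hxy
  · simp
  have hKxy := hKpos _ (sub_ne_zero.mpr hxy)
  rw [Real.norm_of_nonneg (by positivity)]
  calc (w x - w y) ^ 2 * K (x - y)
      ≤ max ((L : ℝ) ^ 2) ((2 * B) ^ 2) * min (dist x y ^ 2) 1 *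
          (S.indicator 1 x + S.indicator 1 y) * K (x - y) :=
        mul_le_mul_of_nonneg_right (sq_sub_le_of_lipschitzWith hw (fun x => hB x)
          (subset_tsupport w) x y) hKxy.le
    _ = _ := by simp only [dist_eq_norm, Pi.add_apply]; ring

end Gagliardo

theorem exists_mul_sq_le_primitive {g : ℝ → ℝ}
    (hg2 : Tendsto (fun t : ℝ => (∫ τ in (0:ℝ)..t, g τ) / t ^ 2) (𝓝[>] 0) atTop) (M : ℝ) :
    ∃ δ > 0, ∀ t ∈ Ico 0 δ, M * t ^ 2 ≤ ∫ τ in (0:ℝ)..t, g τ := by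
  obtain ⟨δ, hδ, hM⟩ := (nhdsGT_basis (0 : ℝ)).eventually_iff.mp (hg2.eventually_ge_atTop M)
  refine ⟨δ, hδ, fun t ⟨ht0, htδ⟩ => ?_⟩
  rcases ht0.eq_or_lt with rfl | ht0
  · simp
  · exact (le_div_iff₀ (by positivity)).mp (hM ⟨ht0, htδ⟩)

section SetIntegral

variable {α : Type*} [MeasurableSpace α] {μ : Measure α} {s : Set α}

theorem setIntegral_sq_pos (hs : μ s ≠ ∞) {u : α → ℝ} (hu : Measurable u) {C : ℝ}
    (hC : ∀ᵐ x ∂μ, |u x| ≤ C) (hne : ¬ ∀ᵐ x ∂μ, x ∈ s → u x = 0) :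
    0 < ∫ x in s, u x ^ 2 ∂μ := by
  have hint : IntegrableOn (fun x => u x ^ 2) s μ :=
    Measure.integrableOn_of_bounded hs (hu.pow_const 2).aestronglyMeasurable (M := C ^ 2)
      (ae_restrict_of_ae (by
        filter_upwards [hC] with x hx
        rw [norm_pow, Real.norm_eq_abs]
        exact pow_le_pow_left₀ (abs_nonneg _) hx 2))
  rw [setIntegral_pos_iff_support_of_nonneg_ae (ae_of_all _ fun x => sq_nonneg _) hint,
    pos_iff_ne_zero]
  contrapose! hne
  rw [ae_iff]
  convert hne using 2
  ext x
  simp [and_comm]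

theorem mul_setIntegral_sq_le_setIntegral_primitive (hs : μ s ≠ ∞) {g : ℝ → ℝ}
    (hg : Continuous g) {M δ : ℝ} (hδ : ∀ t ∈ Ico 0 δ, M * t ^ 2 ≤ ∫ τ in (0:ℝ)..t, g τ)
    {v : α → ℝ} (hv : Measurable v) (hvδ : ∀ᵐ x ∂μ.restrict s, v x ∈ Ico 0 δ) :
    M * ∫ x in s, v x ^ 2 ∂μ ≤ ∫ x in s, (∫ τ in (0:ℝ)..v x, g τ) ∂μ := by
  have hG := intervalIntegral.continuous_primitive (μ := volume)
    (fun a b => hg.intervalIntegrable a b) 0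
  obtain ⟨D, hD⟩ := isCompact_Icc.exists_bound_of_continuousOn (hG.continuousOn (s := Icc 0 δ))
  have hv2 : IntegrableOn (fun x => v x ^ 2) s μ :=
    Measure.integrableOn_of_bounded hs (hv.pow_const 2).aestronglyMeasurable (M := δ ^ 2) (by
      filter_upwards [hvδ] with x hx
      rw [Real.norm_of_nonneg (sq_nonneg _)]
      exact pow_le_pow_left₀ hx.1 hx.2.le 2)
  have hGv : IntegrableOn (fun x => ∫ τ in (0:ℝ)..v x, g τ) s μ :=
    Measure.integrableOn_of_bounded hs (hG.measurable.comp hv).aestronglyMeasurable (M := D) (by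
      filter_upwards [hvδ] with x hx using hD _ (Ico_subset_Icc_self hx))
  rw [← integral_const_mul]
  exact integral_mono_ae (hv2.const_mul M) hGv (by filter_upwards [hvδ] with x hx using hδ _ hx)

end SetIntegral

section Energy

variable {n : ℕ} {s : ℝ} {K : EV n → ℝ} {Ω : Set (EV n)} {μ lam : ℝ} {g : ℝ → ℝ}

theorem twoStar_nonneg (hn : 2 * s < n) : 0 ≤ twoStar n s :=
  div_nonneg (by positivity) (by linarith)

theorem gInner_const_mul (K : EV n → ℝ) (a b : ℝ) (u v : EV n → ℝ) :
    gInner K (fun x => a * u x) (fun x => b * v x) = a * b * gInner K u v := by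
  rw [gInner, gInner, ← integral_const_mul]
  congr 1 with p
  ring

theorem gNorm_const_mul (K : EV n → ℝ) (t : ℝ) (u : EV n → ℝ) :
    gNorm K (fun x => t * u x) = |t| * gNorm K u := by
  rw [gNorm, gNorm, gInner_const_mul, ← sq, Real.sqrt_mul (sq_nonneg t), Real.sqrt_sq_eq_abs]

theorem MemX0.const_mul {u : EV n → ℝ} (hu : MemX0 K Ω u) (t : ℝ) :
    MemX0 K Ω (fun x => t * u x) where
  meas := hu.meas.const_mul t
  zero := by filter_upwards [hu.zero] with x hx hxΩ using by rw [hx hxΩ, mul_zero]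
  fin := (hu.fin.const_mul (t ^ 2)).congr (ae_of_all _ fun p => by ring)

theorem memX0_of_lipschitzWith (hn : 0 < n) (hKpos : ∀ x : EV n, x ≠ 0 → 0 < K x)
    (hK1 : Integrable (fun x : EV n => min (‖x‖ ^ 2) 1 * K x)) {w : EV n → ℝ} {L : ℝ≥0}
    (hw : LipschitzWith L w) (hwc : HasCompactSupport w) (hwΩ : Function.support w ⊆ Ω) :
    MemX0 K Ω w where
  meas := hw.continuous.measurable
  zero := ae_of_all _ fun _ hx => Function.notMem_support.mp fun h => hx (hwΩ h)
  fin := by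
    have : Nonempty (Fin n) := ⟨⟨0, hn⟩⟩
    rw [Measure.volume_eq_prod]
    exact integrable_sq_sub_mul_of_lipschitzWith hKpos hK1 hw hwc

theorem exists_memX0_bounded_nonneg_not_ae_zero (hn : 0 < n)
    (hKpos : ∀ x : EV n, x ≠ 0 → 0 < K x)
    (hK1 : Integrable (fun x : EV n => min (‖x‖ ^ 2) 1 * K x))
    (hΩo : IsOpen Ω) (hΩne : Ω.Nonempty) :
    ∃ w : EV n → ℝ, MemX0 K Ω w ∧ (∃ C : ℝ, ∀ᵐ x, |w x| ≤ C) ∧ (∀ᵐ x, 0 ≤ w x) ∧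
      ¬ (∀ᵐ x, x ∈ Ω → w x = 0) := by
  obtain ⟨x₀, hx₀⟩ := hΩne
  obtain ⟨ρ, hρ, hball⟩ := Metric.isOpen_iff.mp hΩo x₀ hx₀
  let f : ContDiffBump x₀ := ⟨ρ / 2, ρ, by positivity, by linarith⟩
  obtain ⟨L, hL⟩ := (f.contDiff (n := 1)).lipschitzWith_of_hasCompactSupport
    f.hasCompactSupport one_ne_zero
  refine ⟨f, memX0_of_lipschitzWith hn hKpos hK1 hL f.hasCompactSupport (f.support_eq ▸ hball),
    ⟨1, ae_of_all _ fun x => (abs_of_nonneg f.nonneg).trans_le f.le_one⟩,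
    ae_of_all _ fun _ => f.nonneg, fun h => ?_⟩
  refine (Metric.measure_ball_pos volume x₀ hρ).ne' (measure_eq_zero_iff_ae_notMem.mpr ?_)
  filter_upwards [h] with x hx hxb
  exact (f.pos_of_mem_ball hxb).ne' (hx (hball hxb))

theorem energy_zero : energy s K Ω μ lam g (fun _ => 0) = 0 := by
  by_cases h : twoStar n s = 0 <;> simp [energy, gNorm, gInner, h]

theorem energy_le (hn : 2 * s < n) (hμ : 0 ≤ μ) (u : EV n → ℝ) :
    energy s K Ω μ lam g u ≤ 1 / 2 * gNorm K u ^ 2 - lam * ∫ x in Ω, ∫ τ in (0:ℝ)..u x, g τ := by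
  have : 0 ≤ μ / twoStar n s * ∫ x in Ω, |u x| ^ twoStar n s :=
    mul_nonneg (div_nonneg hμ (twoStar_nonneg hn))
      (integral_nonneg fun _ => Real.rpow_nonneg (abs_nonneg _) _)
  rw [energy]
  linarith

theorem exists_energy_const_mul_neg (hn : 2 * s < n) (hΩ : volume Ω ≠ ∞) (hlam : 0 < lam)
    (hμ : 0 ≤ μ) (hgc : Continuous g)
    (hg2 : Tendsto (fun t : ℝ => (∫ τ in (0:ℝ)..t, g τ) / t ^ 2) (𝓝[>] 0) atTop)
    {u : EV n → ℝ} (hu : Measurable u) (hbdd : ∃ C : ℝ, ∀ᵐ x, |u x| ≤ C)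
    (hpos : ∀ᵐ x, 0 ≤ u x) (hne : ¬ ∀ᵐ x, x ∈ Ω → u x = 0) :
    ∃ t₀ > (0:ℝ), ∀ t ∈ Ioo 0 t₀, energy s K Ω μ lam g (fun x => t * u x) < 0 := by
  obtain ⟨C, hC⟩ := hbdd
  set A := ∫ x in Ω, u x ^ 2
  have hA : 0 < A := setIntegral_sq_pos hΩ hu hC hne
  set N := gNorm K u
  -- `M` is chosen so that `t² N² / 2 - λ M t² A = -t²`.
  obtain ⟨δ, hδ, hG⟩ := exists_mul_sq_le_primitive hg2 ((N ^ 2 / 2 + 1) / (lam * A))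
  refine ⟨δ / max C 1, by positivity, fun t ⟨ht0, htδ⟩ => ?_⟩
  have htu : ∀ᵐ x ∂volume.restrict Ω, t * u x ∈ Ico 0 δ := by
    refine ae_restrict_of_ae ?_
    filter_upwards [hC, hpos] with x hCx hx
    refine ⟨mul_nonneg ht0.le hx, ?_⟩
    calc t * u x ≤ t * max C 1 :=
          mul_le_mul_of_nonneg_left ((le_abs_self _).trans (hCx.trans (le_max_left _ _))) ht0.le
      _ < δ := (lt_div_iff₀ (by positivity)).mp htδ
  have hlow := mul_setIntegral_sq_le_setIntegral_primitive hΩ hgc hG (hu.const_mul t) htu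
  have hsq : ∫ x in Ω, (t * u x) ^ 2 = t ^ 2 * A := by
    simp_rw [mul_pow]
    exact integral_const_mul _ _
  rw [hsq] at hlow
  calc energy s K Ω μ lam g (fun x => t * u x)
      ≤ 1 / 2 * (|t| * N) ^ 2 - lam * ∫ x in Ω, ∫ τ in (0:ℝ)..t * u x, g τ := by
        rw [← gNorm_const_mul]
        exact energy_le hn hμ _
    _ ≤ 1 / 2 * (|t| * N) ^ 2 - lam * ((N ^ 2 / 2 + 1) / (lam * A) * (t ^ 2 * A)) := by
        gcongr
    _ = -t ^ 2 := by
        rw [mul_pow, sq_abs]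
        field_simp
        ring
    _ < 0 := neg_neg_of_pos (pow_pos ht0 2)

theorem exists_small_energy_neg_of_memX0 {w : EV n → ℝ} (hw : MemX0 K Ω w)
    (hE : ∃ t₀ > (0:ℝ), ∀ t ∈ Ioo 0 t₀, energy s K Ω μ lam g (fun x => t * w x) < 0)
    {ε : ℝ} (hε : 0 < ε) :
    ∃ v : EV n → ℝ, MemX0 K Ω v ∧ gNorm K v < ε ∧ energy s K Ω μ lam g v < 0 := by
  obtain ⟨t₀, ht₀, hneg⟩ := hE
  set N := gNorm K w
  have hN : 0 ≤ N := Real.sqrt_nonneg _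
  set t := min (t₀ / 2) (ε / (N + 1))
  have ht : 0 < t := lt_min (by linarith) (by positivity)
  have htt₀ : t < t₀ := (min_le_left _ _).trans_lt (by linarith)
  refine ⟨fun x => t * w x, hw.const_mul t, ?_, hneg t ⟨ht, htt₀⟩⟩
  rw [gNorm_const_mul, abs_of_pos ht]
  calc t * N ≤ ε / (N + 1) * N := mul_le_mul_of_nonneg_right (min_le_right _ _) hN
    _ < ε := by
        rw [div_mul_eq_mul_div, div_lt_iff₀ (by positivity)]
        nlinarith

end Energy

theorem statement12_general
    (n : ℕ) (s : ℝ) (hs : s ∈ Set.Ioo (0:ℝ) 1) (hn : 2 * s < n)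
    (Ω : Set (EV n)) (hΩo : IsOpen Ω) (hΩne : Ω.Nonempty) (hΩb : Bornology.IsBounded Ω)
    (K : EV n → ℝ)
    (hKpos : ∀ x : EV n, x ≠ 0 → 0 < K x)
    (hK1 : Integrable (fun x : EV n => min (‖x‖ ^ 2) 1 * K x))
    (lam μ : ℝ) (hlam : 0 < lam) (hμ : 0 < μ)
    (g : ℝ → ℝ) (hgc : Continuous g)
    -- (g2): `liminf_{t→0⁺} G(t)/t² = +∞`:
    (hg2 : Tendsto (fun t : ℝ => (∫ τ in (0:ℝ)..t, g τ) / t ^ 2) (𝓝[>] 0) atTop) :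
    (∀ ub : EV n → ℝ, MemX0 K Ω ub →
      (∃ C : ℝ, ∀ᵐ x ∂(volume : Measure (EV n)), |ub x| ≤ C) →
      (∀ᵐ x ∂(volume : Measure (EV n)), 0 ≤ ub x) →
      ¬ (∀ᵐ x ∂(volume : Measure (EV n)), x ∈ Ω → ub x = 0) →
      ∃ t₀ > (0:ℝ), ∀ t : ℝ, t ∈ Set.Ioo 0 t₀ →
        energy s K Ω μ lam g (fun x => t * ub x) < 0) ∧
    (∀ ε > (0:ℝ), ∃ w : EV n → ℝ, MemX0 K Ω w ∧ gNorm K w < ε ∧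
      energy s K Ω μ lam g w < energy s K Ω μ lam g (fun _ => 0)) := by
  have hn0 : 0 < n := by exact_mod_cast (by linarith [hs.1] : (0:ℝ) < n)
  have hΩ : volume Ω ≠ ∞ := hΩb.measure_lt_top.ne
  refine ⟨fun _ hub => exists_energy_const_mul_neg hn hΩ hlam hμ.le hgc hg2 hub.meas,
    fun ε hε => ?_⟩
  obtain ⟨w, hw, hbdd, hpos, hne⟩ :=
    exists_memX0_bounded_nonneg_not_ae_zero hn0 hKpos hK1 hΩo hΩne
  rw [energy_zero]
  exact exists_small_energy_neg_of_memX0 hw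
    (exists_energy_const_mul_neg hn hΩ hlam hμ.le hgc hg2 hw.meas hbdd hpos hne) hε

/-- **Non-triviality of the minimizer via (g2)** (final step in the proof of
Theorem 3.1): under (g2), for every nonnegative bounded `ū ∈ X₀` not a.e. zero
in `Ω` one has `E_{λ,μ}(t ū) < 0` for all small `t > 0`; in particular `0` is
not a local minimizer of `E_{λ,μ}`. -/
theorem statement12
    (n : ℕ) (s : ℝ) (hs : s ∈ Set.Ioo (0:ℝ) 1) (hn : 2 * s < n)
    (Ω : Set (EV n)) (hΩo : IsOpen Ω) (hΩne : Ω.Nonempty) (hΩb : Bornology.IsBounded Ω)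
    (K : EV n → ℝ)
    (hKpos : ∀ x : EV n, x ≠ 0 → 0 < K x)
    (hK1 : Integrable (fun x : EV n => min (‖x‖ ^ 2) 1 * K x))
    (hK2 : ∃ k₀ > 0, ∀ x : EV n, x ≠ 0 → k₀ * ‖x‖ ^ (-((n : ℝ) + 2 * s)) ≤ K x)
    (lam μ : ℝ) (hlam : 0 < lam) (hμ : 0 < μ)
    (g : ℝ → ℝ) (hgc : Continuous g)
    -- (g2): `liminf_{t→0⁺} G(t)/t² = +∞`:
    (hg2 : Tendsto (fun t : ℝ => (∫ τ in (0:ℝ)..t, g τ) / t ^ 2) (𝓝[>] 0) atTop) :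
    (∀ ub : EV n → ℝ, MemX0 K Ω ub →
      (∃ C : ℝ, ∀ᵐ x ∂(volume : Measure (EV n)), |ub x| ≤ C) →
      (∀ᵐ x ∂(volume : Measure (EV n)), 0 ≤ ub x) →
      ¬ (∀ᵐ x ∂(volume : Measure (EV n)), x ∈ Ω → ub x = 0) →
      ∃ t₀ > (0:ℝ), ∀ t : ℝ, t ∈ Set.Ioo 0 t₀ →
        energy s K Ω μ lam g (fun x => t * ub x) < 0) ∧
    (∀ ε > (0:ℝ), ∃ w : EV n → ℝ, MemX0 K Ω w ∧ gNorm K w < ε ∧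
      energy s K Ω μ lam g w < energy s K Ω μ lam g (fun _ => 0)) :=
  statement12_general n s hs hn Ω hΩo hΩne hΩb K hKpos hK1 lam μ hlam hμ g hgc hg2
end
end

section
/- Let λ,μ > 0 and let g : ℝ → ℝ be continuous satisfying (g1) and (g3): lim_{t→0} g(t)/t = 0. Let {u_j} ⊂ X₀ be a bounded sequence weakly convergent in X₀ to some u_∞ ∈ X₀, and suppose that for every v ∈ X₀, ⟨u_j,v⟩ − μ∫_Ω |u_j|^{2*−2}u_j v dx − λ∫_Ω g(u_j) v dx → 0 as j → ∞. Then u_∞ is a weak solution of (P_{λ,μ}): ⟨u_∞,v⟩ = μ∫_Ω |u_∞|^{2*−2}u_∞ v dx + λ∫_Ω g(u_∞) v dx for every v ∈ X₀. -/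
open MeasureTheory Filter Topology Set

noncomputable section

/-!
The Sobolev constant `c` gives `‖w‖_{L^{2*}(Ω)} ≤ c ‖w‖` on `X₀`: first for the truncations
`min |w| m`, which are again in `X₀` with smaller Gagliardo norm and whose `L^{2*}` integral is
finite (so that `lpNorm` is not a junk value), then for `w` itself by letting `m → ∞`. Hence
`(u_j)` is bounded in `L^{2*}(Ω)`, and its compactness in `L¹(Ω)` yields a subsequence
converging a.e. to `u_∞`. By (g1), both `g(u_j)` and `|u_j|^{2*-2} u_j` are dominated by
`A + B |u_j|^{2*-1}`, hence bounded in the dual exponent `L^{(2*)'}`; Vitali's theorem then lets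
both nonlinear terms pass to the limit against `v ∈ L^{2*}`, while `⟨u_j, v⟩ → ⟨u_∞, v⟩` by weak
convergence.
-/

open scoped ENNReal NNReal

section HolderVitali

variable {α : Type*} [MeasurableSpace α] {ν : Measure α} {t r : ℝ≥0∞} [t.HolderConjugate r]

theorem unifIntegrable_mul_of_eLpNorm_le (hr : r ≠ ∞) {h : ℕ → α → ℝ} {v : α → ℝ}
    (hmeas : ∀ j, AEStronglyMeasurable (h j) ν) (hv : MemLp v r ν)
    {C : ℝ≥0∞} (hC : C ≠ ∞) (hbd : ∀ j, eLpNorm (h j) t ν ≤ C) :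
    UnifIntegrable (fun j x => h j x * v x) 1 ν := by
  intro ε hε
  obtain ⟨δ, hδ, hsmall⟩ :=
    hv.eLpNorm_indicator_le (ENNReal.HolderConjugate.one_le r t) hr
      (ε := ε / (C.toReal + 1)) (by positivity)
  refine ⟨δ, hδ, fun j s hs hνs => ?_⟩
  calc eLpNorm (s.indicator fun x => h j x * v x) 1 ν
      = eLpNorm (h j • s.indicator v) 1 ν := by
        congr 1; ext x; by_cases hx : x ∈ s <;> simp [hx]
    _ ≤ eLpNorm (h j) t ν * eLpNorm (s.indicator v) r ν :=
        eLpNorm_smul_le_mul_eLpNorm (hv.1.indicator hs) (hmeas j)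
    _ ≤ ENNReal.ofReal C.toReal * ENNReal.ofReal (ε / (C.toReal + 1)) := by
        rw [ENNReal.ofReal_toReal hC]
        exact mul_le_mul' (hbd j) (hsmall s hs hνs)
    _ ≤ ENNReal.ofReal ε := by
        rw [← ENNReal.ofReal_mul ENNReal.toReal_nonneg, ← mul_div_assoc]
        refine ENNReal.ofReal_le_ofReal (div_le_of_le_mul₀ (by positivity) hε.le ?_)
        nlinarith [ENNReal.toReal_nonneg (a := C)]

theorem tendsto_integral_mul_of_ae_tendsto_of_eLpNorm_le [IsFiniteMeasure ν] (hr : r ≠ ∞)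
    {h : ℕ → α → ℝ} {f v : α → ℝ}
    (hmeas : ∀ j, AEStronglyMeasurable (h j) ν) (hv : MemLp v r ν)
    {C : ℝ≥0∞} (hC : C ≠ ∞) (hbd : ∀ j, eLpNorm (h j) t ν ≤ C)
    (hae : ∀ᵐ x ∂ν, Tendsto (fun j => h j x) atTop (𝓝 (f x))) :
    Tendsto (fun j => ∫ x, h j x * v x ∂ν) atTop (𝓝 (∫ x, f x * v x ∂ν)) := by
  have hf : MemLp f t ν := ⟨aestronglyMeasurable_of_tendsto_ae atTop hmeas hae,
    (Lp.eLpNorm_le_of_ae_tendsto (.of_forall hbd) hmeas hae).trans_lt hC.lt_top⟩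
  have hfv : MemLp (fun x => f x * v x) 1 ν := hv.smul hf
  have hhv : ∀ j, MemLp (fun x => h j x * v x) 1 ν :=
    fun j => hv.smul ⟨hmeas j, (hbd j).trans_lt hC.lt_top⟩
  refine tendsto_integral_of_L1' _ hfv.1 (.of_forall fun j => (hhv j).integrable le_rfl) ?_
  refine tendsto_Lp_finite_of_tendsto_ae le_rfl ENNReal.one_ne_top (fun j => (hhv j).1) hfv
    (unifIntegrable_mul_of_eLpNorm_le hr hmeas hv hC hbd) ?_
  filter_upwards [hae] with x hx using hx.mul_const (v x)

end HolderVitali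

section NemytskiiOperators

variable {α : Type*} [MeasurableSpace α] {μ : Measure α} {P : ℝ}

theorem abs_abs_rpow_sub_two_mul (hP : 1 < P) (t : ℝ) : |(|t| ^ (P - 2) * t)| = |t| ^ (P - 1) := by
  rw [abs_mul, abs_of_nonneg (by positivity), show P - 1 = (P - 2) + 1 by ring,
    Real.rpow_add' (abs_nonneg t) (by linarith), Real.rpow_one]

theorem eLpNorm_rpow_sub_one_conjExponent (hP : 1 < P) (f : α → ℝ) :
    eLpNorm (fun x => |f x| ^ (P - 1)) (ENNReal.ofReal P.conjExponent) μ
      = eLpNorm f (ENNReal.ofReal P) μ ^ (P - 1) := by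
  have := eLpNorm_norm_rpow (p := ENNReal.ofReal P.conjExponent) (μ := μ) f (sub_pos.mpr hP)
  rwa [← ENNReal.ofReal_mul (by rw [Real.conjExponent]; bound), Real.conjExponent,
    div_mul_cancel₀ _ (sub_pos.mpr hP).ne'] at this

theorem eLpNorm_le_of_abs_le_add_mul_rpow (hP : 1 < P) {A B : ℝ} {f h : α → ℝ}
    (hf : AEStronglyMeasurable f μ) (hh : ∀ x, |h x| ≤ A + B * |f x| ^ (P - 1)) :
    eLpNorm h (ENNReal.ofReal P.conjExponent) μ
      ≤ eLpNorm (fun _ => A) (ENNReal.ofReal P.conjExponent) μ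
        + ‖B‖ₑ * eLpNorm f (ENNReal.ofReal P) μ ^ (P - 1) := by
  have : (ENNReal.ofReal P).HolderConjugate (ENNReal.ofReal P.conjExponent) :=
    (Real.HolderConjugate.conjExponent hP).ennrealOfReal
  calc eLpNorm h (ENNReal.ofReal P.conjExponent) μ
      ≤ eLpNorm ((fun _ => A) + B • fun x => |f x| ^ (P - 1)) (ENNReal.ofReal P.conjExponent) μ :=
        eLpNorm_mono_real hh
    _ ≤ _ := by
        have hfP : AEStronglyMeasurable (fun x => |f x| ^ (P - 1)) μ :=
          (continuous_abs.rpow_const fun _ => .inr (sub_pos.mpr hP).le).comp_aestronglyMeasurable hf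
        grw [eLpNorm_add_le aestronglyMeasurable_const (hfP.const_smul B)
          (ENNReal.HolderConjugate.one_le _ (ENNReal.ofReal P)), eLpNorm_const_smul,
          eLpNorm_rpow_sub_one_conjExponent hP]

theorem tendsto_integral_comp_mul_of_ae_tendsto [IsFiniteMeasure μ] (hP : 1 < P) {F : ℝ → ℝ}
    (hF : Continuous F) {A B : ℝ} (hFbd : ∀ t, |F t| ≤ A + B * |t| ^ (P - 1))
    {u : ℕ → α → ℝ} {w v : α → ℝ} (hu : ∀ j, AEStronglyMeasurable (u j) μ)
    {M : ℝ≥0∞} (hM : M ≠ ∞) (huM : ∀ j, eLpNorm (u j) (ENNReal.ofReal P) μ ≤ M)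
    (hae : ∀ᵐ x ∂μ, Tendsto (fun j => u j x) atTop (𝓝 (w x)))
    (hv : MemLp v (ENNReal.ofReal P) μ) :
    Tendsto (fun j => ∫ x, F (u j x) * v x ∂μ) atTop (𝓝 (∫ x, F (w x) * v x ∂μ)) := by
  have : (ENNReal.ofReal P.conjExponent).HolderConjugate (ENNReal.ofReal P) :=
    (Real.HolderConjugate.conjExponent hP).symm.ennrealOfReal
  refine tendsto_integral_mul_of_ae_tendsto_of_eLpNorm_le ENNReal.ofReal_ne_top
    (fun j => hF.comp_aestronglyMeasurable (hu j)) hv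
    (C := eLpNorm (fun _ => A) (ENNReal.ofReal P.conjExponent) μ + ‖B‖ₑ * M ^ (P - 1)) ?_
    (fun j => (eLpNorm_le_of_abs_le_add_mul_rpow hP (hu j) fun x => hFbd (u j x)).trans ?_) ?_
  · exact ENNReal.add_ne_top.mpr ⟨(memLp_const A).eLpNorm_ne_top,
      ENNReal.mul_ne_top enorm_ne_top (ENNReal.rpow_ne_top_of_nonneg (sub_pos.mpr hP).le hM)⟩
  · gcongr
    exact huM j
  · filter_upwards [hae] with x hx using (hF.tendsto (w x)).comp hx

end NemytskiiOperators

theorem aemeasurable_of_aemeasurable_mul {α : Type*} [MeasurableSpace α] {μ : Measure α}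
    {w f : α → ℝ} (hw : Measurable w) (hw0 : ∀ᵐ x ∂μ, w x ≠ 0)
    (hwf : AEMeasurable (fun x => w x * f x) μ) : AEMeasurable f μ :=
  (hw.inv.aemeasurable.mul hwf).congr <| by
    filter_upwards [hw0] with x hx using inv_mul_cancel_left₀ hx (f x)

theorem sq_sub_le_of_lipschitzWith_one {φ : ℝ → ℝ} (hφ : LipschitzWith 1 φ) (a b : ℝ) :
    (φ a - φ b) ^ 2 ≤ (a - b) ^ 2 := by
  simpa [Real.dist_eq] using pow_le_pow_left₀ dist_nonneg (hφ.dist_le_mul a b) 2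

section GagliardoForm

variable {n : ℕ} {K : EV n → ℝ} {Ω : Set (EV n)}

theorem aemeasurable_comp_sub (hK : AEMeasurable K) :
    AEMeasurable (fun p : EV n × EV n => K (p.1 - p.2)) := by
  rw [Measure.volume_eq_prod]
  exact (hK.comp_quasiMeasurePreserving Measure.quasiMeasurePreserving_fst
    ).comp_quasiMeasurePreserving (measurePreserving_sub_prod _ _).quasiMeasurePreserving

theorem gInner_self_eq_integral_sq (u : EV n → ℝ) :
    gInner K u u = ∫ p : EV n × EV n, (u p.1 - u p.2) ^ 2 * K (p.1 - p.2) := by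
  simp only [gInner, sq]

variable [NeZero n]

theorem aemeasurable_of_integrable_min_sq_mul
    (hK1 : Integrable (fun x : EV n => min (‖x‖ ^ 2) 1 * K x)) : AEMeasurable K := by
  refine aemeasurable_of_aemeasurable_mul (by fun_prop) ?_ hK1.aemeasurable
  filter_upwards [(Set.countable_singleton (0 : EV n)).ae_notMem volume] with x hx
  have : 0 < ‖x‖ := norm_pos_iff.mpr hx
  positivity

theorem ae_pos_comp_sub (hKpos : ∀ x : EV n, x ≠ 0 → 0 < K x) :
    ∀ᵐ p : EV n × EV n, 0 < K (p.1 - p.2) := by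
  have : ∀ᵐ p : EV n × EV n, p.1 - p.2 ≠ 0 := by
    rw [Measure.volume_eq_prod,
      Measure.ae_prod_iff_ae_ae (p := fun p : EV n × EV n => p.1 - p.2 ≠ 0)
        ((measurable_fst.sub measurable_snd) (measurableSet_singleton 0).compl)]
    refine .of_forall fun x => ?_
    filter_upwards [(Set.countable_singleton x).ae_notMem volume] with y hy
    exact sub_ne_zero.mpr (Ne.symm hy)
  filter_upwards [this] with p hp using hKpos _ hp

variable (hKpos : ∀ x : EV n, x ≠ 0 → 0 < K x)
include hKpos

theorem gInner_self_nonneg (u : EV n → ℝ) : 0 ≤ gInner K u u := by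
  rw [gInner_self_eq_integral_sq]
  refine integral_nonneg_of_ae ?_
  filter_upwards [ae_pos_comp_sub hKpos] with p hp using by positivity

theorem ae_sq_sub_comp_mul_le {φ : ℝ → ℝ} (hφ : LipschitzWith 1 φ) (u : EV n → ℝ) :
    ∀ᵐ p : EV n × EV n, (φ (u p.1) - φ (u p.2)) ^ 2 * K (p.1 - p.2)
      ≤ (u p.1 - u p.2) ^ 2 * K (p.1 - p.2) := by
  filter_upwards [ae_pos_comp_sub hKpos] with p hp
  exact mul_le_mul_of_nonneg_right (sq_sub_le_of_lipschitzWith_one hφ _ _) hp.le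

theorem MemX0.comp_lipschitzWith (hK : AEMeasurable K) {φ : ℝ → ℝ} (hφ : LipschitzWith 1 φ)
    (hφ0 : φ 0 = 0) {u : EV n → ℝ} (hu : MemX0 K Ω u) : MemX0 K Ω (φ ∘ u) := by
  have hφu : Measurable (φ ∘ u) := hφ.continuous.measurable.comp hu.meas
  refine ⟨hφu, ?_, hu.fin.mono' ?_ ?_⟩
  · filter_upwards [hu.zero] with x hx hxΩ
    simp [hx hxΩ, hφ0]
  · exact ((((hφu.comp measurable_fst).sub (hφu.comp measurable_snd)).pow_const 2).aemeasurable.mul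
      (aemeasurable_comp_sub hK)).aestronglyMeasurable
  · filter_upwards [ae_sq_sub_comp_mul_le hKpos hφ u, ae_pos_comp_sub hKpos] with p hp hpos
    rw [Real.norm_of_nonneg (by positivity)]
    exact hp

theorem gInner_comp_lipschitzWith_le (hK : AEMeasurable K) {φ : ℝ → ℝ} (hφ : LipschitzWith 1 φ)
    (hφ0 : φ 0 = 0) {u : EV n → ℝ} (hu : MemX0 K Ω u) :
    gInner K (φ ∘ u) (φ ∘ u) ≤ gInner K u u := by
  simp only [gInner_self_eq_integral_sq]
  exact integral_mono_ae (hu.comp_lipschitzWith hKpos hK hφ hφ0).fin hu.fin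
    (ae_sq_sub_comp_mul_le hKpos hφ u)

theorem MemX0.ae_eq_zero_of_gInner_self_eq_zero (hΩ : volume Ωᶜ ≠ 0) {u : EV n → ℝ}
    (hu : MemX0 K Ω u) (h0 : gInner K u u = 0) : ∀ᵐ x, u x = 0 := by
  rw [gInner_self_eq_integral_sq] at h0
  have hdiag : ∀ᵐ p : EV n × EV n, u p.1 = u p.2 := by
    have hnn : 0 ≤ᵐ[volume] fun p : EV n × EV n => (u p.1 - u p.2) ^ 2 * K (p.1 - p.2) := by
      filter_upwards [ae_pos_comp_sub hKpos] with p hp using by positivity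
    filter_upwards [(integral_eq_zero_iff_of_nonneg_ae hnn hu.fin).mp h0,
      ae_pos_comp_sub hKpos] with p hp hpos
    simpa [hpos.ne', sub_eq_zero] using hp
  rw [Measure.volume_eq_prod] at hdiag
  filter_upwards [Measure.ae_ae_of_ae_prod hdiag] with x hx
  have hN := ae_iff.mp (hx.and hu.zero)
  obtain ⟨y, hyΩ, hy⟩ := nonempty_of_measure_ne_zero
    (by rwa [measure_sdiff_null hN] : volume (Ωᶜ \ _) ≠ 0)
  simp only [Set.mem_ofPred_eq, not_not] at hy
  exact hy.1.trans (hy.2 hyΩ)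

end GagliardoForm

section SobolevInequality

variable {n : ℕ} {K : EV n → ℝ} {Ω : Set (EV n)} {P c : ℝ}

theorem lpNorm_eq_toReal_eLpNorm (hP : 0 < P) {u : EV n → ℝ}
    (hu : MemLp u (ENNReal.ofReal P) (volume.restrict Ω)) :
    lpNorm Ω P u = (eLpNorm u (ENNReal.ofReal P) (volume.restrict Ω)).toReal := by
  rw [hu.eLpNorm_eq_integral_rpow_norm (by simpa using hP) ENNReal.ofReal_ne_top,
    ENNReal.toReal_ofReal hP.le, ENNReal.toReal_ofReal (by positivity)]
  simp only [_root_.lpNorm, Real.norm_eq_abs, one_div]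

variable [NeZero n] (hKpos : ∀ x : EV n, x ≠ 0 → 0 < K x) (hΩ : volume Ωᶜ ≠ 0) (hP : 0 < P)
  (hc : ∀ u, MemX0 K Ω u → ¬ (∀ᵐ x, u x = 0) → lpNorm Ω P u / gNorm K u ≤ c)
include hKpos hΩ hP hc

theorem MemX0.eLpNorm_le_of_memLp {u : EV n → ℝ} (hu : MemX0 K Ω u)
    (huP : MemLp u (ENNReal.ofReal P) (volume.restrict Ω)) :
    eLpNorm u (ENNReal.ofReal P) (volume.restrict Ω) ≤ ENNReal.ofReal (c * gNorm K u) := by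
  by_cases hu0 : ∀ᵐ x, u x = 0
  · rw [eLpNorm_congr_ae (ae_restrict_of_ae hu0 : u =ᵐ[volume.restrict Ω] 0), eLpNorm_zero]
    exact bot_le
  · have hpos : 0 < gNorm K u := Real.sqrt_pos.mpr <| (gInner_self_nonneg hKpos u).lt_of_ne'
      fun h => hu0 (hu.ae_eq_zero_of_gInner_self_eq_zero hKpos hΩ h)
    rw [← ENNReal.ofReal_toReal huP.eLpNorm_ne_top, ← lpNorm_eq_toReal_eLpNorm hP huP]
    exact ENNReal.ofReal_le_ofReal ((div_le_iff₀ hpos).mp (hc u hu hu0))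

theorem MemX0.eLpNorm_le (hΩfin : volume Ω ≠ ∞) (hK : AEMeasurable K) (hc0 : 0 ≤ c)
    {u : EV n → ℝ} (hu : MemX0 K Ω u) :
    eLpNorm u (ENNReal.ofReal P) (volume.restrict Ω) ≤ ENNReal.ofReal (c * gNorm K u) := by
  have : IsFiniteMeasure (volume.restrict Ω) := isFiniteMeasure_restrict.mpr hΩfin
  set trunc : ℕ → ℝ → ℝ := fun m t => min ‖t‖ m
  have htrunc : ∀ m, LipschitzWith 1 (trunc m) := fun m => lipschitzWith_one_norm.min_const _
  have htrunc0 : ∀ m, trunc m 0 = 0 := by simp [trunc]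
  have htruncX : ∀ m, MemX0 K Ω (trunc m ∘ u) :=
    fun m => hu.comp_lipschitzWith hKpos hK (htrunc m) (htrunc0 m)
  rw [← eLpNorm_norm]
  refine Lp.eLpNorm_le_of_ae_tendsto (u := atTop) (f := fun m => trunc m ∘ u)
    (.of_forall fun m => ?_) (fun m => (htruncX m).meas.aestronglyMeasurable)
    (.of_forall fun x => ?_)
  · calc eLpNorm (trunc m ∘ u) (ENNReal.ofReal P) (volume.restrict Ω)
        ≤ ENNReal.ofReal (c * gNorm K (trunc m ∘ u)) :=
          (htruncX m).eLpNorm_le_of_memLp hKpos hΩ hP hc <|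
            .of_bound (htruncX m).meas.aestronglyMeasurable m (.of_forall fun x => by
              simp [trunc, abs_of_nonneg (le_min (abs_nonneg (u x)) m.cast_nonneg)])
      _ ≤ ENNReal.ofReal (c * gNorm K u) := by
          gcongr
          exact Real.sqrt_le_sqrt <| gInner_comp_lipschitzWith_le hKpos hK (htrunc m) (htrunc0 m) hu
  · refine tendsto_atTop_of_eventually_const (i₀ := ⌈‖u x‖⌉₊) fun m hm => ?_
    exact min_eq_left ((Nat.le_ceil _).trans (Nat.cast_le.mpr hm))

end SobolevInequality

theorem two_lt_twoStar {n : ℕ} {s : ℝ} (hs : 0 < s) (hn : 2 * s < n) : 2 < twoStar n s := by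
  rw [twoStar, lt_div_iff₀ (by linarith)]
  linarith

theorem measure_compl_ne_zero_of_isBounded {n : ℕ} [NeZero n] {Ω : Set (EV n)}
    (hΩ : Bornology.IsBounded Ω) : volume Ωᶜ ≠ 0 := by
  intro h
  have := measure_univ_le_add_compl (μ := volume) Ω
  rw [h, add_zero, measure_univ_of_isAddLeftInvariant] at this
  exact hΩ.measure_lt_top.ne (top_le_iff.mp this)

theorem MemX0.eLpNorm_twoStar_le {n : ℕ} {s c : ℝ} {K : EV n → ℝ} {Ω : Set (EV n)}
    (hs : 0 < s) (hn : 2 * s < n) (hΩ : Bornology.IsBounded Ω)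
    (hKpos : ∀ x : EV n, x ≠ 0 → 0 < K x)
    (hK1 : Integrable (fun x : EV n => min (‖x‖ ^ 2) 1 * K x)) (hc : 0 ≤ c)
    (hclub : c ∈ upperBounds {ρ : ℝ | ∃ u, MemX0 K Ω u ∧ ¬ (∀ᵐ x, u x = 0) ∧
      ρ = lpNorm Ω (twoStar n s) u / gNorm K u})
    {u : EV n → ℝ} (hu : MemX0 K Ω u) :
    eLpNorm u (ENNReal.ofReal (twoStar n s)) (volume.restrict Ω)
      ≤ ENNReal.ofReal (c * gNorm K u) := by
  have : NeZero n := ⟨by rintro rfl; rw [Nat.cast_zero] at hn; linarith⟩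
  exact hu.eLpNorm_le hKpos (measure_compl_ne_zero_of_isBounded hΩ)
    (by linarith [two_lt_twoStar hs hn]) (fun w hw hw0 => hclub ⟨w, hw, hw0, rfl⟩)
    hΩ.measure_lt_top.ne (aemeasurable_of_integrable_min_sq_mul hK1) hc

theorem abs_le_add_mul_rpow_of_exponent_le {g : ℝ → ℝ} {a₁ a₂ q P : ℝ} (ha₂ : 0 ≤ a₂)
    (hq : 1 ≤ q) (hqP : q ≤ P) (hg : ∀ t, |g t| ≤ a₁ + a₂ * |t| ^ (q - 1)) (t : ℝ) :
    |g t| ≤ (a₁ + a₂) + a₂ * |t| ^ (P - 1) := by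
  have : |t| ^ (q - 1) ≤ 1 + |t| ^ (P - 1) := by
    rcases le_total |t| 1 with h | h
    · exact (Real.rpow_le_one (abs_nonneg t) h (by linarith)).trans
        (le_add_of_nonneg_right (by positivity))
    · exact (Real.rpow_le_rpow_of_exponent_le h (by linarith)).trans
        (le_add_of_nonneg_left zero_le_one)
  nlinarith [hg t]

theorem exists_subseq_ae_tendsto_of_lpNorm_one {n : ℕ} {Ω : Set (EV n)} {u : ℕ → EV n → ℝ}
    {w : EV n → ℝ} (hu : ∀ j, MemLp (u j) 1 (volume.restrict Ω))
    (hw : MemLp w 1 (volume.restrict Ω))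
    (h : Tendsto (fun j => lpNorm Ω 1 (fun x => u j x - w x)) atTop (𝓝 0)) :
    ∃ φ : ℕ → ℕ, StrictMono φ ∧
      ∀ᵐ x ∂volume.restrict Ω, Tendsto (fun k => u (φ k) x) atTop (𝓝 (w x)) := by
  have hdiff : ∀ j, MemLp (u j - w) (ENNReal.ofReal 1) (volume.restrict Ω) := by
    simpa using fun j => (hu j).sub hw
  have hL1 : Tendsto (fun j => eLpNorm (u j - w) 1 (volume.restrict Ω)) atTop (𝓝 0) := by
    rw [← ENNReal.tendsto_toReal_zero_iff fun j => (hu j).sub hw |>.eLpNorm_ne_top]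
    refine h.congr fun j => ?_
    exact (lpNorm_eq_toReal_eLpNorm one_pos (hdiff j)).trans (by rw [ENNReal.ofReal_one])
  exact (tendstoInMeasure_of_tendsto_eLpNorm one_ne_zero (fun j => (hu j).1) hw.1
    hL1).exists_seq_tendsto_ae

theorem statement16_general
    (n : ℕ) (s : ℝ) (hs : s ∈ Set.Ioo (0:ℝ) 1) (hn : 2 * s < n)
    (Ω : Set (EV n)) (hΩb : Bornology.IsBounded Ω)
    (K : EV n → ℝ)
    (hKpos : ∀ x : EV n, x ≠ 0 → 0 < K x)
    (hK1 : Integrable (fun x : EV n => min (‖x‖ ^ 2) 1 * K x))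
    (c : ℝ) (hc : 0 < c)
    (hclub : IsLUB {ρ : ℝ | ∃ u, MemX0 K Ω u ∧
        ¬ (∀ᵐ x ∂(volume : Measure (EV n)), u x = 0) ∧
        ρ = lpNorm Ω (twoStar n s) u / gNorm K u} c)
    (hcpt : ∀ (uj : ℕ → EV n → ℝ) (u : EV n → ℝ), (∀ j, MemX0 K Ω (uj j)) →
        MemX0 K Ω u → WeakConv K Ω uj u → ∀ p : ℝ, 1 ≤ p → p < twoStar n s →
        Tendsto (fun j => lpNorm Ω p (fun x => uj j x - u x)) atTop (𝓝 0))
    (lam μ : ℝ)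
    (g : ℝ → ℝ) (hgc : Continuous g)
    (a₁ a₂ q : ℝ) (ha₂ : 0 < a₂) (hq₁ : 1 ≤ q) (hq₂ : q < twoStar n s)
    (hg1 : ∀ t : ℝ, |g t| ≤ a₁ + a₂ * |t| ^ (q - 1))
    (uj : ℕ → EV n → ℝ) (uinf : EV n → ℝ)
    (hujX : ∀ j, MemX0 K Ω (uj j))
    (hbdd : ∃ M : ℝ, ∀ j, gNorm K (uj j) ≤ M)
    (huinfX : MemX0 K Ω uinf)
    (hweak : WeakConv K Ω uj uinf)
    (hPS : ∀ v, MemX0 K Ω v →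
      Tendsto (fun j => gInner K (uj j) v -
        μ * (∫ x in Ω, |uj j x| ^ (twoStar n s - 2) * uj j x * v x) -
        lam * ∫ x in Ω, g (uj j x) * v x) atTop (𝓝 0)) :
    ∀ v, MemX0 K Ω v → gInner K uinf v =
      μ * (∫ x in Ω, |uinf x| ^ (twoStar n s - 2) * uinf x * v x) +
        lam * ∫ x in Ω, g (uinf x) * v x := by
  intro v hv
  set P := twoStar n s
  have hP : 2 < P := two_lt_twoStar hs.1 hn
  have : IsFiniteMeasure (volume.restrict Ω) :=
    isFiniteMeasure_restrict.mpr hΩb.measure_lt_top.ne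
  have hsob {w : EV n → ℝ} (hw : MemX0 K Ω w) :=
    hw.eLpNorm_twoStar_le hs.1 hn hΩb hKpos hK1 hc.le hclub.1
  have hLP : ∀ w, MemX0 K Ω w → MemLp w (ENNReal.ofReal P) (volume.restrict Ω) :=
    fun w hw => ⟨hw.meas.aestronglyMeasurable, (hsob hw).trans_lt ENNReal.ofReal_lt_top⟩
  have hL1 : ∀ w, MemX0 K Ω w → MemLp w 1 (volume.restrict Ω) :=
    fun w hw => (hLP w hw).mono_exponent (ENNReal.one_le_ofReal.mpr (by linarith))
  obtain ⟨M, hM⟩ := hbdd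
  obtain ⟨φ, hφ, hae⟩ := exists_subseq_ae_tendsto_of_lpNorm_one (fun j => hL1 _ (hujX j))
    (hL1 _ huinfX) (hcpt uj uinf hujX huinfX hweak 1 le_rfl (by linarith))
  have hpass {F : ℝ → ℝ} {A B : ℝ} (hF : Continuous F)
      (hFbd : ∀ t, |F t| ≤ A + B * |t| ^ (P - 1)) :=
    tendsto_integral_comp_mul_of_ae_tendsto (by linarith) hF hFbd
      (fun k => (hujX (φ k)).meas.aestronglyMeasurable) ENNReal.ofReal_ne_top
      (fun k => (hsob (hujX (φ k))).trans
        (ENNReal.ofReal_le_ofReal (mul_le_mul_of_nonneg_left (hM (φ k)) hc.le))) hae (hLP v hv)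
  have hcrit := hpass (F := fun t => |t| ^ (P - 2) * t) (A := 0) (B := 1)
    ((continuous_abs.rpow_const fun _ => .inr (by linarith)).mul continuous_id)
    (fun t => by simp [abs_abs_rpow_sub_two_mul (by linarith : 1 < P)])
  have hnonlin := hpass hgc (abs_le_add_mul_rpow_of_exponent_le ha₂.le hq₁ hq₂.le hg1)
  have hlim : Tendsto (fun j => μ * (∫ x in Ω, |uj j x| ^ (P - 2) * uj j x * v x)
      + lam * ∫ x in Ω, g (uj j x) * v x) atTop (𝓝 (gInner K uinf v)) := by
    simpa using ((hweak v hv).sub (hPS v hv)).congr fun j => by ring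
  exact tendsto_nhds_unique (hlim.comp hφ.tendsto_atTop)
    ((hcrit.const_mul μ).add (hnonlin.const_mul lam))

/-- **Weak limits of Palais–Smale-type sequences are weak solutions** (step in
the proof of Theorem 4.1): if a bounded sequence `u_j ⇀ u_∞` in `X₀` satisfies
`⟨u_j,v⟩ − μ∫|u_j|^{2*−2}u_j v − λ∫g(u_j)v → 0` for every `v ∈ X₀`, then `u_∞`
is a weak solution of `(P_{λ,μ})`. -/
theorem statement16
    (n : ℕ) (s : ℝ) (hs : s ∈ Set.Ioo (0:ℝ) 1) (hn : 2 * s < n)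
    (Ω : Set (EV n)) (hΩo : IsOpen Ω) (hΩne : Ω.Nonempty) (hΩb : Bornology.IsBounded Ω)
    (K : EV n → ℝ)
    (hKpos : ∀ x : EV n, x ≠ 0 → 0 < K x)
    (hK1 : Integrable (fun x : EV n => min (‖x‖ ^ 2) 1 * K x))
    (hK2 : ∃ k₀ > 0, ∀ x : EV n, x ≠ 0 → k₀ * ‖x‖ ^ (-((n : ℝ) + 2 * s)) ≤ K x)
    (c : ℝ) (hc : 0 < c)
    (hclub : IsLUB {ρ : ℝ | ∃ u, MemX0 K Ω u ∧
        ¬ (∀ᵐ x ∂(volume : Measure (EV n)), u x = 0) ∧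
        ρ = lpNorm Ω (twoStar n s) u / gNorm K u} c)
    (hcpt : ∀ (uj : ℕ → EV n → ℝ) (u : EV n → ℝ), (∀ j, MemX0 K Ω (uj j)) →
        MemX0 K Ω u → WeakConv K Ω uj u → ∀ p : ℝ, 1 ≤ p → p < twoStar n s →
        Tendsto (fun j => lpNorm Ω p (fun x => uj j x - u x)) atTop (𝓝 0))
    (lam μ : ℝ) (hlam : 0 < lam) (hμ : 0 < μ)
    (g : ℝ → ℝ) (hgc : Continuous g)
    (a₁ a₂ q : ℝ) (ha₁ : 0 < a₁) (ha₂ : 0 < a₂) (hq₁ : 1 ≤ q) (hq₂ : q < twoStar n s)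
    (hg1 : ∀ t : ℝ, |g t| ≤ a₁ + a₂ * |t| ^ (q - 1))
    -- (g3): `lim_{t→0} g(t)/t = 0`:
    (hg3 : Tendsto (fun t : ℝ => g t / t) (𝓝[≠] 0) (𝓝 0))
    (uj : ℕ → EV n → ℝ) (uinf : EV n → ℝ)
    (hujX : ∀ j, MemX0 K Ω (uj j))
    (hbdd : ∃ M : ℝ, ∀ j, gNorm K (uj j) ≤ M)
    (huinfX : MemX0 K Ω uinf)
    (hweak : WeakConv K Ω uj uinf)
    (hPS : ∀ v, MemX0 K Ω v →
      Tendsto (fun j => gInner K (uj j) v -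
        μ * (∫ x in Ω, |uj j x| ^ (twoStar n s - 2) * uj j x * v x) -
        lam * ∫ x in Ω, g (uj j x) * v x) atTop (𝓝 0)) :
    ∀ v, MemX0 K Ω v → gInner K uinf v =
      μ * (∫ x in Ω, |uinf x| ^ (twoStar n s - 2) * uinf x * v x) +
        lam * ∫ x in Ω, g (uinf x) * v x :=
  statement16_general n s hs hn Ω hΩb K hKpos hK1 c hc hclub hcpt lam μ g hgc a₁ a₂ q ha₂ hq₁ hq₂
    hg1 uj uinf hujX hbdd huinfX hweak hPS
end
end
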